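/- arXiv:2503.12304 — 3 statements merged into one kernel-verified Lean document; each statement's English description precedes it below -/
import Mathlib

section
/- Let A be a diagonalizable m×m complex matrix with a spectral decomposition (a_j, P_j)_{j∈J}. Then the first-order right-decomposition formula exp(A + B) = exp(A)·exp(dcr_A(B)) + O(‖B‖²) holds; precisely, the map B ↦ exp(A + B) − exp(A)·exp(dcr_A(B)) is big-O of ‖B‖² as B → 0 in the space of m×m complex matrices. -/
open Asymptotics Matrix NormedSpace

noncomputable section

attribute [local instance] Matrix.frobeniusSeminormedAddCommGroup
  Matrix.frobeniusNormedAddCommGroup Matrix.frobeniusNormedSpace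

/-- A spectral decomposition of a diagonalizable matrix `A`: a finite family of pairwise
distinct eigenvalues `a j` and projections `P j` with `P j * P k = δ_{jk} P j`,
`∑ j, P j = 1` and `A = ∑ j, a j • P j`. -/
def IsSpectralDecomposition {m : ℕ} {J : Type*} [Fintype J] [DecidableEq J] (A : Matrix (Fin m) (Fin m) ℂ)
    (a : J → ℂ) (P : J → Matrix (Fin m) (Fin m) ℂ) : Prop :=
  Function.Injective a ∧
  (∀ j k, P j * P k = if j = k then P j else 0) ∧
  (∑ j, P j = 1) ∧
  A = ∑ j, a j • P j

/-- `ℓ_{jk}(A) = 1` if `j = k` and `(e^{a_j - a_k} - 1)/(a_j - a_k)` otherwise. -/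
def ell {J : Type*} [DecidableEq J] (a : J → ℂ) (j k : J) : ℂ :=
  if j = k then 1 else (Complex.exp (a j - a k) - 1) / (a j - a k)

/-- `dcr_A(X) = ∑_{j,k} ℓ_{kj}(A) P_j X P_k`. -/
def dcr {m : ℕ} {J : Type*} [Fintype J] [DecidableEq J] (a : J → ℂ) (P : J → Matrix (Fin m) (Fin m) ℂ)
    (X : Matrix (Fin m) (Fin m) ℂ) : Matrix (Fin m) (Fin m) ℂ :=
  ∑ j, ∑ k, ell a k j • (P j * X * P k)

section Aux

open scoped Nat

attribute [local instance] Matrix.frobeniusNormedRing Matrix.frobeniusNormedAlgebra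

variable {m : ℕ} {J : Type*} [Fintype J] [DecidableEq J]
variable {A : Matrix (Fin m) (Fin m) ℂ} {a : J → ℂ} {P : J → Matrix (Fin m) (Fin m) ℂ}

local notation "𝔸" => Matrix (Fin m) (Fin m) ℂ

lemma aux_pow (hP : ∀ j k, P j * P k = if j = k then P j else 0) (h1 : ∑ j, P j = 1)
    (hAeq : A = ∑ j, a j • P j) (n : ℕ) : A ^ n = ∑ j, (a j ^ n) • P j := by
  induction n with
  | zero => simp [h1]
  | succ n ih =>
    rw [pow_succ, ih, hAeq, Finset.sum_mul]
    refine Finset.sum_congr rfl fun j _ => ?_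
    rw [Finset.mul_sum]
    have h : ∀ k, (a j ^ n • P j) * (a k • P k)
        = (a j ^ n * a k) • (if j = k then P j else 0) := fun k => by
      rw [smul_mul_smul_comm, hP]
    simp_rw [h, smul_ite, smul_zero]
    rw [Finset.sum_ite_eq]
    simp [pow_succ]

lemma aux_exp (hP : ∀ j k, P j * P k = if j = k then P j else 0) (h1 : ∑ j, P j = 1)
    (hAeq : A = ∑ j, a j • P j) : NormedSpace.exp A = ∑ j, Complex.exp (a j) • P j := by
  have hs := exp_series_hasSum_exp' (𝕂 := ℂ) A
  have hs2 : HasSum (fun n : ℕ => (n !⁻¹ : ℂ) • A ^ n) (∑ j, Complex.exp (a j) • P j) := by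
    have h : (fun n : ℕ => (n !⁻¹ : ℂ) • A ^ n)
        = fun n => ∑ j, ((n !⁻¹ : ℂ) * a j ^ n) • P j := by
      funext n
      rw [aux_pow hP h1 hAeq, Finset.smul_sum]
      simp [smul_smul]
    rw [h]
    refine hasSum_sum fun j _ => ?_
    have hj : HasSum (fun n : ℕ => (n !⁻¹ : ℂ) * a j ^ n) (Complex.exp (a j)) := by
      rw [Complex.exp_eq_exp_ℂ]
      simpa [smul_eq_mul] using exp_series_hasSum_exp' (𝕂 := ℂ) (a j)
    exact hj.smul_const (P j)
  exact hs.unique hs2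

lemma aux_mul_proj (hP : ∀ j k, P j * P k = if j = k then P j else 0)
    {c : J → ℂ} {M : 𝔸} (hM : M = ∑ j, c j • P j) (k : J) : M * P k = c k • P k := by
  rw [hM, Finset.sum_mul]
  have h : ∀ j, (c j • P j) * P k = c j • (if j = k then P j else 0) := fun j => by
    rw [smul_mul_assoc, hP]
  simp_rw [h, smul_ite, smul_zero]
  rw [Finset.sum_ite_eq' Finset.univ k]
  simp

lemma aux_proj_mul (hP : ∀ j k, P j * P k = if j = k then P j else 0)
    {c : J → ℂ} {M : 𝔸} (hM : M = ∑ j, c j • P j) (k : J) : P k * M = c k • P k := by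
  rw [hM, Finset.mul_sum]
  have h : ∀ j, P k * (c j • P j) = c j • (if k = j then P k else 0) := fun j => by
    rw [mul_smul_comm, hP]
  simp_rw [h, smul_ite, smul_zero]
  rw [Finset.sum_ite_eq Finset.univ k]
  simp

/-- The derivative of `exp` at `A` along a sandwiched direction. -/
lemma aux_fderiv_sandwich
    (hinj : Function.Injective a)
    (hP : ∀ j k, P j * P k = if j = k then P j else 0) (h1 : ∑ j, P j = 1)
    (hAeq : A = ∑ j, a j • P j) (B : 𝔸) (j k : J) :
    fderiv ℂ (NormedSpace.exp) A (P j * B * P k)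
      = (Complex.exp (a j) * ell a k j) • (P j * B * P k) := by
  have hD : DifferentiableAt ℂ (NormedSpace.exp) A := (exp_analytic A).differentiableAt
  have hF : HasFDerivAt (NormedSpace.exp) (fderiv ℂ (NormedSpace.exp) A) A := hD.hasFDerivAt
  set X : 𝔸 := P j * B * P k with hX
  have hexpA : NormedSpace.exp A = ∑ l, Complex.exp (a l) • P l := aux_exp hP h1 hAeq
  have hAX : A * X = a j • X := by
    rw [hX, ← mul_assoc, ← mul_assoc, aux_mul_proj hP hAeq j, smul_mul_assoc, smul_mul_assoc]
  have hXA : X * A = a k • X := by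
    rw [hX, mul_assoc, aux_proj_mul hP hAeq k, mul_smul_comm]
  have heAX : NormedSpace.exp A * X = Complex.exp (a j) • X := by
    rw [hX, ← mul_assoc, ← mul_assoc, aux_mul_proj hP hexpA j, smul_mul_assoc, smul_mul_assoc]
  have hXeA : X * NormedSpace.exp A = Complex.exp (a k) • X := by
    rw [hX, mul_assoc, aux_proj_mul hP hexpA k, mul_smul_comm]
  -- the derivative of the curve `t ↦ exp (A + t • X)` at `0` is `fderiv … A X`
  have hcurve : HasDerivAt (fun t : ℂ => NormedSpace.exp (A + t • X)) (fderiv ℂ (NormedSpace.exp) A X) 0 := by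
    have hg : HasDerivAt (fun t : ℂ => A + t • X) X 0 := by
      have h := ((hasDerivAt_id (0 : ℂ)).smul_const X).const_add A
      rw [one_smul] at h
      exact h
    have hF' : HasFDerivAt (NormedSpace.exp) (fderiv ℂ (NormedSpace.exp) A) (A + (0 : ℂ) • X) := by
      simpa using hF
    have h := hF'.comp_hasDerivAt (0 : ℂ) hg
    exact h
  by_cases hjk : j = k
  · -- diagonal case: `A` commutes with `X`
    subst hjk
    have hcomm : Commute A X := by rw [Commute, SemiconjBy, hAX, hXA]
    have hfun : (fun t : ℂ => NormedSpace.exp (A + t • X)) = fun t : ℂ => NormedSpace.exp A * NormedSpace.exp (t • X) := by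
      funext t
      exact exp_add_of_commute (hcomm.smul_right t)
    have hd2 : HasDerivAt (fun t : ℂ => NormedSpace.exp A * NormedSpace.exp (t • X)) (NormedSpace.exp A * X) 0 := by
      have h := (hasDerivAt_exp_smul_const (𝕂 := ℂ) X (0 : ℂ)).const_mul (NormedSpace.exp A)
      simp at h
      exact h
    rw [hfun] at hcurve
    have := hcurve.unique hd2
    rw [this, heAX, ell]
    simp
  · -- off-diagonal case: `X * X = 0` and conjugation gives an exact formula
    have hajk : a j ≠ a k := fun h => hjk (hinj h)
    have hsub : a k - a j ≠ 0 := sub_ne_zero.mpr (Ne.symm hajk)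
    have hXX : X * X = 0 := by
      rw [hX]
      have : P k * (P j * B * P k) = 0 := by
        rw [← mul_assoc, ← mul_assoc, hP k j, if_neg (Ne.symm hjk)]
        simp
      calc P j * B * P k * (P j * B * P k) = P j * B * (P k * (P j * B * P k)) := by
            rw [mul_assoc]
          _ = 0 := by rw [this, mul_zero]
    set ph : ℂ := (Complex.exp (a j) - Complex.exp (a k)) / (a j - a k) with hph
    have key : ∀ t : ℂ, NormedSpace.exp (A + t • X) = NormedSpace.exp A + (t * ph) • X := by
      intro t
      set c : ℂ := t / (a k - a j) with hc
      have hct : c * (a k - a j) = t := div_mul_cancel₀ _ hsub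
      set Y : 𝔸 := c • X with hY
      have hYY : Y * Y = 0 := by rw [hY, smul_mul_smul_comm, hXX, smul_zero]
      have huv : (1 + Y) * (1 - Y) = 1 := by
        have : (1 + Y) * (1 - Y) = 1 + Y - Y - Y * Y := by noncomm_ring
        rw [this, hYY]
        abel
      have hvu : (1 - Y) * (1 + Y) = 1 := by
        have : (1 - Y) * (1 + Y) = 1 + Y - Y - Y * Y := by noncomm_ring
        rw [this, hYY]
        abel
      set U : 𝔸ˣ := ⟨1 + Y, 1 - Y, huv, hvu⟩ with hU
      have sandwich : ∀ (M : 𝔸) (α β : ℂ), M * X = α • X → X * M = β • X →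
          (1 + Y) * M * (1 - Y) = M + (c * (β - α)) • X := by
        intro M α β hMX hXM
        have hexpand : (1 + Y) * M * (1 - Y) = M + Y * M - M * Y - Y * M * Y := by noncomm_ring
        have h1' : Y * M = (c * β) • X := by
          rw [hY, smul_mul_assoc, hXM, smul_smul]
        have h2' : M * Y = (c * α) • X := by
          rw [hY, mul_smul_comm, hMX, smul_smul]
        have h3' : Y * M * Y = 0 := by
          rw [h1', hY, smul_mul_smul_comm, hXX, smul_zero]
        rw [hexpand, h3', h1', h2', sub_zero, add_sub_assoc, ← sub_smul, mul_sub]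
      have hconjA : (1 + Y) * A * (1 - Y) = A + t • X := by
        rw [sandwich A (a j) (a k) hAX hXA, hct]
      have hconjE : (1 + Y) * NormedSpace.exp A * (1 - Y)
          = NormedSpace.exp A + (c * (Complex.exp (a k) - Complex.exp (a j))) • X :=
        sandwich (NormedSpace.exp A) (Complex.exp (a j)) (Complex.exp (a k)) heAX hXeA
      have hUinv : (↑U⁻¹ : 𝔸) = 1 - Y := rfl
      have : NormedSpace.exp (A + t • X) = NormedSpace.exp ((↑U : 𝔸) * A * (↑U⁻¹ : 𝔸)) := by
        rw [hUinv]
        exact congrArg _ hconjA.symm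
      rw [this, show NormedSpace.exp ((↑U : 𝔸) * A * (↑U⁻¹ : 𝔸)) = ↑U * NormedSpace.exp A * ↑U⁻¹ from
        NormedSpace.exp_units_conj U A, hUinv]
      show (1 + Y) * NormedSpace.exp A * (1 - Y) = _
      rw [hconjE]
      congr 2
      rw [hph, hc]
      field_simp [hsub, sub_ne_zero.mpr hajk]
      ring
    have hfun : (fun t : ℂ => NormedSpace.exp (A + t • X)) = fun t : ℂ => NormedSpace.exp A + (t * ph) • X :=
      funext key
    have hd2 : HasDerivAt (fun t : ℂ => NormedSpace.exp A + (t * ph) • X) (ph • X) 0 := by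
      have h := (((hasDerivAt_id (0 : ℂ)).mul_const ph).smul_const X).const_add (NormedSpace.exp A)
      rw [one_mul] at h
      exact h
    rw [hfun] at hcurve
    have hres := hcurve.unique hd2
    rw [hres]
    congr 1
    rw [hph, ell, if_neg (Ne.symm hjk)]
    have hE : Complex.exp (a j) * Complex.exp (a k - a j) = Complex.exp (a k) := by
      rw [← Complex.exp_add]
      congr 1
      ring
    rw [← mul_div_assoc, mul_sub, hE, mul_one, ← neg_sub (Complex.exp (a k)) (Complex.exp (a j)),
      ← neg_sub (a k) (a j), neg_div_neg_eq]

lemma aux_fderiv (hinj : Function.Injective a)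
    (hP : ∀ j k, P j * P k = if j = k then P j else 0) (h1 : ∑ j, P j = 1)
    (hAeq : A = ∑ j, a j • P j) (B : 𝔸) :
    fderiv ℂ (NormedSpace.exp) A B = NormedSpace.exp A * dcr a P B := by
  have hexpA : NormedSpace.exp A = ∑ l, Complex.exp (a l) • P l := aux_exp hP h1 hAeq
  have hB : B = ∑ j, ∑ k, P j * B * P k := by
    have e1 : B = (∑ j, P j) * B * (∑ k, P k) := by rw [h1, one_mul, mul_one]
    conv_lhs => rw [e1]
    rw [Finset.sum_mul, Finset.sum_mul]
    exact Finset.sum_congr rfl fun j _ => Finset.mul_sum _ _ _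
  conv_lhs => rw [hB]
  rw [map_sum]
  have hstep : ∀ j ∈ Finset.univ, fderiv ℂ (NormedSpace.exp) A (∑ k, P j * B * P k)
      = ∑ k, (Complex.exp (a j) * ell a k j) • (P j * B * P k) := by
    intro j _
    rw [map_sum]
    exact Finset.sum_congr rfl fun k _ => aux_fderiv_sandwich hinj hP h1 hAeq B j k
  rw [Finset.sum_congr rfl hstep]
  rw [dcr, Finset.mul_sum]
  refine Finset.sum_congr rfl fun j _ => ?_
  rw [Finset.mul_sum]
  refine Finset.sum_congr rfl fun k _ => ?_
  have hPB : NormedSpace.exp A * (P j * B * P k) = Complex.exp (a j) • (P j * B * P k) := by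
    rw [← mul_assoc, ← mul_assoc, aux_mul_proj hP hexpA j, smul_mul_assoc, smul_mul_assoc]
  rw [mul_smul_comm, hPB, smul_smul, mul_comm (ell a k j)]

lemma aux_main (A : Matrix (Fin m) (Fin m) ℂ) (a : J → ℂ) (P : J → Matrix (Fin m) (Fin m) ℂ)
    (hA : IsSpectralDecomposition A a P) :
    (fun B : Matrix (Fin m) (Fin m) ℂ =>
        NormedSpace.exp (A + B) - NormedSpace.exp A * NormedSpace.exp (dcr a P B))
      =O[nhds 0] (fun B => ‖B‖ ^ 2) := by
  obtain ⟨hinj, hP, h1, hAeq⟩ := hA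
  -- Taylor expansion of `exp` at `A`
  obtain ⟨p, hp⟩ := exp_analytic (𝕂 := ℂ) A
  have hO1 := hp.isBigO_sub_partialSum_pow 2
  have hps : ∀ y : 𝔸, p.partialSum 2 y = NormedSpace.exp A + fderiv ℂ (NormedSpace.exp) A y := by
    intro y
    have h0 : (p 0 fun _ => y) = NormedSpace.exp A := hp.coeff_zero _
    have h1' : (p 1 fun _ => y) = fderiv ℂ (NormedSpace.exp) A y := by
      rw [show fderiv ℂ (NormedSpace.exp) A = _ from hp.fderiv_eq]
      change (p 1 fun _ => y) = p 1 (Fin.snoc (0 : Fin 0 → 𝔸) y)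
      have hsn : (fun _ : Fin 1 => y) = Fin.snoc (0 : Fin 0 → 𝔸) y := by
        funext i
        fin_cases i
        simp [Fin.snoc]
      rw [hsn]
    rw [FormalMultilinearSeries.partialSum, Finset.sum_range_succ, Finset.sum_range_one, h0, h1']
  have hO1' : (fun B : 𝔸 => NormedSpace.exp (A + B) - NormedSpace.exp A - NormedSpace.exp A * dcr a P B)
      =O[nhds 0] (fun B => ‖B‖ ^ 2) := by
    have heq : (fun y : 𝔸 => NormedSpace.exp (A + y) - p.partialSum 2 y)
        = fun B : 𝔸 => NormedSpace.exp (A + B) - NormedSpace.exp A - NormedSpace.exp A * dcr a P B := by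
      funext y
      rw [hps, aux_fderiv hinj hP h1 hAeq, sub_add_eq_sub_sub]
    rw [← heq]
    exact hO1
  -- Taylor expansion of `exp` at `0`, composed with `dcr`
  have hO2 : (fun C : 𝔸 => NormedSpace.exp C - 1 - C) =O[nhds 0] fun C : 𝔸 => ‖C‖ ^ 2 := by
    have hq := (exp_hasFPowerSeriesAt_zero (𝕂 := ℂ) :
        HasFPowerSeriesAt (NormedSpace.exp) (expSeries ℂ 𝔸) 0).isBigO_sub_partialSum_pow 2
    have heq : (fun y : 𝔸 => NormedSpace.exp ((0 : 𝔸) + y) - (expSeries ℂ 𝔸).partialSum 2 y)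
        = fun C : 𝔸 => NormedSpace.exp C - 1 - C := by
      funext y
      rw [FormalMultilinearSeries.partialSum, Finset.sum_range_succ, Finset.sum_range_one,
        expSeries_apply_eq, expSeries_apply_eq, zero_add]
      simp [Nat.factorial]
      abel
    rw [← heq]
    exact hq
  -- `dcr` is a (continuous) linear map
  let T : 𝔸 →ₗ[ℂ] 𝔸 :=
    { toFun := dcr a P
      map_add' := fun X Y => by
        simp only [dcr, mul_add, add_mul, smul_add, Finset.sum_add_distrib]
      map_smul' := fun c X => by
        simp only [dcr, RingHom.id_apply, Finset.smul_sum, mul_smul_comm, smul_mul_assoc]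
        refine Finset.sum_congr rfl fun j _ => Finset.sum_congr rfl fun k _ => ?_
        rw [smul_comm] }
  let Tc : 𝔸 →L[ℂ] 𝔸 := LinearMap.toContinuousLinearMap T
  have hdO : (fun B : 𝔸 => dcr a P B) =O[nhds 0] (fun B : 𝔸 => B) := Tc.isBigO_id _
  have hT0 : Filter.Tendsto (fun B : 𝔸 => dcr a P B) (nhds 0) (nhds 0) := by
    have := Tc.continuous.tendsto (0 : 𝔸)
    rw [map_zero] at this
    exact this
  have hO3 : (fun B : 𝔸 => NormedSpace.exp (dcr a P B) - 1 - dcr a P B) =O[nhds 0] fun B => ‖B‖ ^ 2 := by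
    have hcomp := hO2.comp_tendsto hT0
    refine hcomp.trans ?_
    have := (hdO.norm_norm.pow 2)
    exact this
  have hO4 : (fun B : 𝔸 => NormedSpace.exp A * (NormedSpace.exp (dcr a P B) - 1 - dcr a P B))
      =O[nhds 0] fun B => ‖B‖ ^ 2 := hO3.const_mul_left (NormedSpace.exp A)
  have hfinal := hO1'.sub hO4
  have heq : (fun B : 𝔸 => (NormedSpace.exp (A + B) - NormedSpace.exp A - NormedSpace.exp A * dcr a P B)
      - NormedSpace.exp A * (NormedSpace.exp (dcr a P B) - 1 - dcr a P B))
      = fun B : 𝔸 => NormedSpace.exp (A + B) - NormedSpace.exp A * NormedSpace.exp (dcr a P B) := by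
    funext B
    rw [mul_sub, mul_sub, mul_one]
    abel
  rw [heq] at hfinal
  exact hfinal

end Aux

/-- First-order right-decomposition formula:
`exp (A + B) = exp A * exp (dcr_A B) + O(‖B‖²)` as `B → 0` (Frobenius norm). -/
theorem exp_add_eq_exp_mul_exp_dcr_add_bigO
    {m : ℕ} (hm : 0 < m) {J : Type*} [Fintype J] [DecidableEq J]
    (A : Matrix (Fin m) (Fin m) ℂ) (a : J → ℂ) (P : J → Matrix (Fin m) (Fin m) ℂ)
    (hA : IsSpectralDecomposition A a P) :
    (fun B : Matrix (Fin m) (Fin m) ℂ =>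
        NormedSpace.exp (A + B) - NormedSpace.exp A * NormedSpace.exp (dcr a P B))
      =O[nhds 0] (fun B => ‖B‖ ^ 2) := by
  exact aux_main A a P hA
end
end

section
/- Let A be a diagonalizable m×m complex matrix with a spectral decomposition (a_j, P_j)_{j∈J}, and let B be any m×m complex matrix. Then the line integral ∫₀¹ exp(sA)·B·exp(−sA) ds (integral over s ∈ [0,1] of the matrix-valued integrand) equals dcl_A(B) = ∑_{j,k} ℓ_{jk}(A) P_j B P_k. -/
open Asymptotics Matrix NormedSpace

noncomputable section

attribute [local instance] Matrix.frobeniusSeminormedAddCommGroup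
  Matrix.frobeniusNormedAddCommGroup Matrix.frobeniusNormedSpace

/-- `dcl_A(X) = ∑_{j,k} ℓ_{jk}(A) P_j X P_k`. -/
def dcl {m : ℕ} {J : Type*} [Fintype J] [DecidableEq J] (a : J → ℂ) (P : J → Matrix (Fin m) (Fin m) ℂ)
    (X : Matrix (Fin m) (Fin m) ℂ) : Matrix (Fin m) (Fin m) ℂ :=
  ∑ j, ∑ k, ell a j k • (P j * X * P k)

attribute [local instance] Matrix.frobeniusNormedRing Matrix.frobeniusNormedAlgebra

/-- The scalar integral `∫₀¹ e^{s c} ds`. -/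
lemma integral_cexp_unit (c : ℂ) :
    (∫ s in (0:ℝ)..1, Complex.exp (s * c)) = if c = 0 then 1 else (Complex.exp c - 1) / c := by
  rcases eq_or_ne c 0 with rfl | hc
  · simp
  · rw [if_neg hc]
    have h : ∀ s ∈ Set.uIcc (0:ℝ) 1,
        HasDerivAt (fun t : ℝ => Complex.exp (t * c) / c) (Complex.exp (s * c)) s := by
      intro s _
      have h1 : HasDerivAt (fun t : ℝ => (t : ℂ) * c) c s := by
        simpa using (Complex.ofRealCLM.hasDerivAt (x := s)).mul_const c
      have h2 := h1.cexp
      have h3 := h2.div_const c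
      simpa only [mul_div_cancel_right₀ _ hc] using h3
    have hint : IntervalIntegrable (fun s : ℝ => Complex.exp (s * c))
        MeasureTheory.volume 0 1 :=
      (Complex.continuous_exp.comp (Complex.continuous_ofReal.mul continuous_const)).intervalIntegrable _ _
    rw [intervalIntegral.integral_eq_sub_of_hasDerivAt h hint]
    simp [sub_div]

section aux

variable {m : ℕ} {J : Type*} [Fintype J] [DecidableEq J]

/-- The algebra hom `(J → ℂ) →ₐ[ℂ] Matrix`, `f ↦ ∑ j, f j • P j`. -/
def specHom (P : J → Matrix (Fin m) (Fin m) ℂ)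
    (hP : ∀ j k, P j * P k = if j = k then P j else 0) (h1 : ∑ j, P j = 1) :
    (J → ℂ) →ₐ[ℂ] Matrix (Fin m) (Fin m) ℂ :=
  AlgHom.ofLinearMap
    { toFun := fun f => ∑ j, f j • P j
      map_add' := by intro f g; simp [add_smul, Finset.sum_add_distrib]
      map_smul' := by intro c f; simp [smul_smul, Finset.smul_sum] }
    (by simp [h1])
    (by
      intro f g
      simp only [LinearMap.coe_mk, AddHom.coe_mk, Pi.mul_apply]
      rw [Finset.sum_mul_sum]
      rw [Finset.sum_comm]
      refine Finset.sum_congr rfl fun k _ => ?_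
      rw [Finset.sum_eq_single k]
      · rw [smul_mul_smul_comm, hP k k, if_pos rfl]
      · intro j _ hj
        simp [smul_mul_smul_comm, hP j k, hj]
      · simp)

lemma exp_sum_smul (P : J → Matrix (Fin m) (Fin m) ℂ)
    (hP : ∀ j k, P j * P k = if j = k then P j else 0) (h1 : ∑ j, P j = 1)
    (f : J → ℂ) :
    exp (∑ j, f j • P j) = ∑ j, Complex.exp (f j) • P j := by
  have hcont : Continuous (specHom P hP h1) :=
    (specHom P hP h1).toLinearMap.continuous_of_finiteDimensional
  have := map_exp (specHom P hP h1) hcont f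
  have hf : specHom P hP h1 f = ∑ j, f j • P j := rfl
  rw [hf] at this
  refine this.symm.trans ?_
  have hexp : exp f = fun j => Complex.exp (f j) := by
    rw [Pi.exp_def]
    funext j
    rw [Complex.exp_eq_exp_ℂ]
  rw [hexp]
  rfl

end aux

/-- The line integral `∫ s in [0,1], exp (s • A) * B * exp (-(s • A)) ds` equals
`dcl_A(B) = ∑_{j,k} ℓ_{jk}(A) P_j B P_k`. -/
theorem integral_exp_smul_mul_exp_neg_smul_eq_dcl
    {m : ℕ} (hm : 0 < m) {J : Type*} [Fintype J] [DecidableEq J]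
    (A : Matrix (Fin m) (Fin m) ℂ) (a : J → ℂ) (P : J → Matrix (Fin m) (Fin m) ℂ)
    (hA : IsSpectralDecomposition A a P)
    (B : Matrix (Fin m) (Fin m) ℂ) :
    (∫ s in (0:ℝ)..1, NormedSpace.exp (s • A) * B * NormedSpace.exp (-(s • A))) = dcl a P B := by
  obtain ⟨hinj, hP, h1, hAeq⟩ := hA
  -- Rewrite the integrand as a finite sum of scalar exponentials times constant matrices
  have key : ∀ s : ℝ, exp (s • A) * B * exp (-(s • A))
      = ∑ p : J × J, Complex.exp (s * (a p.1 - a p.2)) • (P p.1 * B * P p.2) := by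
    intro s
    have e1 : (s : ℂ) • A = ∑ j, ((s : ℂ) * a j) • P j := by
      rw [hAeq, Finset.smul_sum]; simp [smul_smul]
    have e2 : -((s : ℂ) • A) = ∑ j, (-((s : ℂ) * a j)) • P j := by
      rw [e1, ← Finset.sum_neg_distrib]; simp [neg_smul]
    have hsA : (s • A : Matrix (Fin m) (Fin m) ℂ) = (s : ℂ) • A := by
      simp
    rw [hsA, e1]
    have e2' : -(∑ j, ((s : ℂ) * a j) • P j) = ∑ j, (-((s : ℂ) * a j)) • P j := by
      rw [← Finset.sum_neg_distrib]; simp [neg_smul]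
    rw [e2', exp_sum_smul P hP h1, exp_sum_smul P hP h1]
    simp only [Finset.sum_mul, Finset.mul_sum, smul_mul_assoc, mul_smul_comm, smul_smul,
      Finset.smul_sum]
    rw [Fintype.sum_prod_type, Finset.sum_comm]
    refine Finset.sum_congr rfl fun k _ => Finset.sum_congr rfl fun j _ => ?_
    congr 1
    rw [← Complex.exp_add]
    ring_nf
  simp only [key]
  rw [intervalIntegral.integral_finset_sum (fun p _ => by
    exact (((Complex.continuous_ofReal.mul continuous_const).cexp).smul continuous_const).intervalIntegrable _ _)]
  rw [dcl, Fintype.sum_prod_type]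
  refine Finset.sum_congr rfl fun j _ => Finset.sum_congr rfl fun k _ => ?_
  rw [intervalIntegral.integral_smul_const, integral_cexp_unit]
  congr 1
  rcases eq_or_ne j k with h | h
  · simp [ell, h]
  · rw [if_neg (sub_ne_zero.mpr (fun hh => h (hinj hh))), ell, if_neg h]
end
end

section
/- Let A be a diagonalizable m×m complex matrix with a spectral decomposition (a_j, P_j)_{j∈J}, and let B be any m×m complex matrix. Then the line integral ∫₀¹ exp(−sA)·B·exp(sA) ds (integral over s ∈ [0,1] of the matrix-valued integrand) equals dcr_A(B) = ∑_{j,k} ℓ_{kj}(A) P_j B P_k. -/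
open Asymptotics Matrix NormedSpace

noncomputable section

attribute [local instance] Matrix.frobeniusSeminormedAddCommGroup
  Matrix.frobeniusNormedAddCommGroup Matrix.frobeniusNormedSpace

attribute [local instance] Matrix.frobeniusNormedRing Matrix.frobeniusNormedAlgebra

-- scalar integral
lemma aux_integral_cexp (c : ℂ) (hc : c ≠ 0) :
    (∫ s in (0:ℝ)..1, Complex.exp (s * c)) = (Complex.exp c - 1) / c := by
  have h : ∀ s ∈ Set.uIcc (0:ℝ) 1, HasDerivAt (fun t : ℝ => c⁻¹ * Complex.exp (t * c))
      (Complex.exp (s * c)) s := by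
    intro s _
    have h1 : HasDerivAt (fun t : ℝ => (t : ℂ) * c) c s := by
      simpa using (Complex.ofRealCLM.hasDerivAt (x := s)).mul_const c
    have h2 := (h1.cexp).const_mul c⁻¹
    have h3 : c⁻¹ * (Complex.exp (↑s * c) * c) = Complex.exp (↑s * c) := by
      field_simp
    rw [h3] at h2; exact h2
  have hcont : IntervalIntegrable (fun s : ℝ => Complex.exp (s * c)) MeasureTheory.volume 0 1 :=
    (Continuous.intervalIntegrable (by continuity) 0 1)
  rw [intervalIntegral.integral_eq_sub_of_hasDerivAt h hcont]
  simp [div_eq_inv_mul, mul_sub]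

-- powers
lemma aux_pow_s9 {m : ℕ} {J : Type*} [Fintype J] [DecidableEq J]
    (c : J → ℂ) (P : J → Matrix (Fin m) (Fin m) ℂ)
    (hP : ∀ j k, P j * P k = if j = k then P j else 0) (hP1 : ∑ j, P j = 1) (n : ℕ) :
    (∑ j, c j • P j) ^ n = ∑ j, (c j ^ n) • P j := by
  induction n with
  | zero => simpa using hP1.symm
  | succ n ih =>
      rw [pow_succ, ih, Finset.sum_mul_sum]
      rw [Finset.sum_comm]
      refine Finset.sum_congr rfl fun k _ => ?_
      rw [Finset.sum_eq_single k]
      · rw [smul_mul_assoc, mul_smul_comm, hP k k, if_pos rfl, smul_smul, pow_succ]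
      · intro j _ hjk
        rw [smul_mul_assoc, mul_smul_comm, hP j k, if_neg hjk, smul_zero, smul_zero]
      · intro h; exact absurd (Finset.mem_univ k) h

lemma aux_exp_s9 {m : ℕ} {J : Type*} [Fintype J] [DecidableEq J]
    (c : J → ℂ) (P : J → Matrix (Fin m) (Fin m) ℂ)
    (hP : ∀ j k, P j * P k = if j = k then P j else 0) (hP1 : ∑ j, P j = 1) :
    exp (∑ j, c j • P j) = ∑ j, Complex.exp (c j) • P j := by
  rw [exp_eq_tsum (𝕂 := ℂ)]
  have : ∀ n : ℕ, ((n.factorial : ℂ)⁻¹ • (∑ j, c j • P j) ^ n)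
      = ∑ j, ((n.factorial : ℂ)⁻¹ * c j ^ n) • P j := by
    intro n
    rw [aux_pow_s9 c P hP hP1, Finset.smul_sum]
    exact Finset.sum_congr rfl fun j _ => by rw [smul_smul]
  simp_rw [this]
  rw [Summable.tsum_finsetSum (fun j _ => ?_)]
  · refine Finset.sum_congr rfl fun j _ => ?_
    have hs : Summable fun n : ℕ => ((n.factorial : ℂ)⁻¹ * c j ^ n) := by
      simpa [smul_eq_mul] using expSeries_summable' (𝕂 := ℂ) (c j)
    rw [Summable.tsum_smul_const hs]
    congr 1
    rw [Complex.exp_eq_exp_ℂ, exp_eq_tsum (𝕂 := ℂ)]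
    simp [smul_eq_mul]
  · exact Summable.smul_const (by
      simpa [smul_eq_mul] using expSeries_summable' (𝕂 := ℂ) (c j)) _

set_option maxHeartbeats 1000000 in
/-- The line integral `∫ s in [0,1], exp (-(s • A)) * B * exp (s • A) ds` equals
`dcr_A(B) = ∑_{j,k} ℓ_{kj}(A) P_j B P_k`. -/
theorem integral_exp_neg_smul_mul_exp_smul_eq_dcr
    {m : ℕ} (hm : 0 < m) {J : Type*} [Fintype J] [DecidableEq J]
    (A : Matrix (Fin m) (Fin m) ℂ) (a : J → ℂ) (P : J → Matrix (Fin m) (Fin m) ℂ)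
    (hA : IsSpectralDecomposition A a P)
    (B : Matrix (Fin m) (Fin m) ℂ) :
    (∫ s in (0:ℝ)..1, exp (-(s • A)) * B * exp (s • A)) = dcr a P B := by
  obtain ⟨ha, hP, hP1, hAeq⟩ := hA
  have hA' : ∀ t : ℝ, t • A = ∑ j, ((t : ℂ) * a j) • P j := by
    intro t
    rw [hAeq, Finset.smul_sum]
    exact Finset.sum_congr rfl fun j _ => by
      rw [← smul_assoc, Complex.real_smul]
  have key : ∀ s : ℝ, exp (-(s • A)) * B * exp (s • A)
      = ∑ j, ∑ k, Complex.exp ((s : ℂ) * (a k - a j)) • (P j * B * P k) := by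
    intro s
    have h1 : exp (s • A) = ∑ k, Complex.exp ((s : ℂ) * a k) • P k := by
      rw [hA' s]; exact aux_exp_s9 _ P hP hP1
    have h2 : exp (-(s • A)) = ∑ j, Complex.exp (-((s : ℂ) * a j)) • P j := by
      have : -(s • A) = ∑ j, (-((s : ℂ) * a j)) • P j := by
        rw [hA' s, ← Finset.sum_neg_distrib]
        exact Finset.sum_congr rfl fun j _ => (neg_smul _ _).symm
      rw [this]; exact aux_exp_s9 _ P hP hP1
    rw [h1, h2, Finset.sum_mul, Finset.sum_mul]
    refine Finset.sum_congr rfl fun j _ => ?_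
    rw [Finset.mul_sum]
    refine Finset.sum_congr rfl fun k _ => ?_
    rw [smul_mul_assoc, smul_mul_assoc, mul_smul_comm, smul_smul, ← Complex.exp_add]
    congr 1
    ring
  simp_rw [key]
  have hcont : ∀ (c : ℂ) (M : Matrix (Fin m) (Fin m) ℂ),
      Continuous fun s : ℝ => Complex.exp ((s : ℂ) * c) • M := fun c M =>
    (Complex.continuous_exp.comp ((Complex.continuous_ofReal).mul continuous_const)).smul
      continuous_const
  have hint : ∀ (c : ℂ) (M : Matrix (Fin m) (Fin m) ℂ),
      @IntervalIntegrable _ _ (NormedAddGroup.toENormedAddMonoid (F := Matrix (Fin m) (Fin m) ℂ)) (fun s : ℝ => Complex.exp ((s : ℂ) * c) • M)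
        MeasureTheory.volume 0 1 := fun c M => (hcont c M).intervalIntegrable 0 1
  rw [intervalIntegral.integral_finset_sum
    (f := fun j (s : ℝ) => ∑ k, Complex.exp ((s : ℂ) * (a k - a j)) • (P j * B * P k))
    (fun j _ => (Continuous.intervalIntegrable
      (continuous_finset_sum _ (fun k _ => hcont (a k - a j) (P j * B * P k))) 0 1))]
  refine Finset.sum_congr rfl fun j _ => ?_
  rw [intervalIntegral.integral_finset_sum
    (f := fun k (s : ℝ) => Complex.exp ((s : ℂ) * (a k - a j)) • (P j * B * P k))
    (fun k _ => hint _ _)]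
  refine Finset.sum_congr rfl fun k _ => ?_
  rw [intervalIntegral.integral_smul_const]
  congr 1
  by_cases hjk : j = k
  · subst hjk
    simp [ell]
  · have hne : a k - a j ≠ 0 := sub_ne_zero.mpr fun h => hjk (ha h).symm
    rw [aux_integral_cexp _ hne, ell, if_neg (fun h => hjk h.symm)]
end
end
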